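/- arXiv:2302.08223 — 6 statements merged into one kernel-verified Lean document; each statement's English description precedes it below -/
import Mathlib

section
/- Let K ≥ 1 be a natural number, let π > 0 and c > 0 be real numbers, and let α : Fin K → ℝ satisfy α k > 0 for all k and ∑ k, α k = π. Then ∑ k, (α k) · (2^(c / α k) − 1) ≥ π · (2^(c·K/π) − 1), with equality if and only if α k = π / K for every k. (Equivalently: under a total budget of π PRBs, the load-dependent transmit power ∑_k α_k p_k in the symmetric scenario is minimized by the equal split α_k = π/K.) -/
open Finset

private lemma tangent_id (a x m : ℝ) (hx : x ≠ 0) (hm : m ≠ 0) :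
    x * Real.exp (a / x)
      - (m * Real.exp (a / m) + Real.exp (a / m) * (1 - a / m) * (x - m))
    = x * Real.exp (a / m) * (Real.exp (a / x - a / m) - 1 - (a / x - a / m)) := by
  have h : Real.exp (a / x) = Real.exp (a / m) * Real.exp (a / x - a / m) := by
    rw [← Real.exp_add]; ring_nf
  rw [h]; field_simp; ring

private lemma tangent_le (a x m : ℝ) (ha : 0 < a) (hx : 0 < x) (hm : 0 < m) :
    m * Real.exp (a / m) + Real.exp (a / m) * (1 - a / m) * (x - m)
      ≤ x * Real.exp (a / x) := by
  have h := tangent_id a x m hx.ne' hm.ne'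
  have hs : 0 ≤ Real.exp (a / x - a / m) - 1 - (a / x - a / m) := by
    have := Real.add_one_le_exp (a / x - a / m); linarith
  have hp : 0 ≤ x * Real.exp (a / m) * (Real.exp (a / x - a / m) - 1 - (a / x - a / m)) :=
    mul_nonneg (mul_nonneg hx.le (Real.exp_pos _).le) hs
  linarith

private lemma tangent_eq (a x m : ℝ) (ha : 0 < a) (hx : 0 < x) (hm : 0 < m)
    (heq : m * Real.exp (a / m) + Real.exp (a / m) * (1 - a / m) * (x - m)
      = x * Real.exp (a / x)) : x = m := by
  by_contra hne
  have ht : a / x - a / m ≠ 0 := by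
    refine sub_ne_zero.mpr fun h => hne ?_
    have h2 : a * m = a * x := (div_eq_div_iff hx.ne' hm.ne').mp h
    exact (mul_left_cancel₀ ha.ne' h2).symm
  have h := tangent_id a x m hx.ne' hm.ne'
  have h2 := Real.add_one_lt_exp ht
  have hp : 0 < x * Real.exp (a / m) * (Real.exp (a / x - a / m) - 1 - (a / x - a / m)) :=
    mul_pos (mul_pos hx (Real.exp_pos _)) (by linarith)
  linarith

/-- Lemma 1: in the symmetric scenario, the equal PRB split minimizes the
load-dependent transmit power under a total budget of `T` PRBs. -/
theorem equal_split_minimizes_power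
    (K : ℕ) (hK : 1 ≤ K) (T c : ℝ) (hT : 0 < T) (hc : 0 < c)
    (α : Fin K → ℝ) (hα : ∀ k, 0 < α k) (hsum : ∑ k, α k = T) :
    T * ((2 : ℝ) ^ (c * K / T) - 1) ≤ ∑ k, α k * ((2 : ℝ) ^ (c / α k) - 1) ∧
    ((∑ k, α k * ((2 : ℝ) ^ (c / α k) - 1) = T * ((2 : ℝ) ^ (c * K / T) - 1)) ↔
      ∀ k, α k = T / K) := by
  set a : ℝ := c * Real.log 2 with ha_def
  have hlog2 : 0 < Real.log 2 := Real.log_pos (by norm_num)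
  have ha : 0 < a := mul_pos hc hlog2
  have hKpos : (0 : ℝ) < (K : ℝ) := by exact_mod_cast hK
  set m : ℝ := T / K with hm_def
  have hm : 0 < m := div_pos hT hKpos
  have hKm : (K : ℝ) * m = T := by rw [hm_def]; field_simp
  have hrw : ∀ x : ℝ, 0 < x → (2 : ℝ) ^ (c / x) = Real.exp (a / x) := by
    intro x hx
    rw [Real.rpow_def_of_pos (by norm_num : (0:ℝ) < 2)]
    congr 1
    rw [ha_def]; ring
  have hrwK : (2 : ℝ) ^ (c * K / T) = Real.exp (a / m) := by
    rw [Real.rpow_def_of_pos (by norm_num : (0:ℝ) < 2)]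
    congr 1
    rw [hm_def, ha_def]
    field_simp
  set D : ℝ := Real.exp (a / m) * (1 - a / m) with hD_def
  have hsum_tangent :
      ∑ k, (m * Real.exp (a / m) + D * (α k - m)) = T * Real.exp (a / m) := by
    rw [Finset.sum_add_distrib, Finset.sum_const, ← Finset.mul_sum,
      Finset.sum_sub_distrib, hsum, Finset.sum_const]
    simp only [card_univ, Fintype.card_fin, nsmul_eq_mul]
    linear_combination (Real.exp (a / m) - D) * hKm
  have hle : ∀ k : Fin K, m * Real.exp (a / m) + D * (α k - m)
      ≤ α k * Real.exp (a / α k) := fun k => tangent_le a (α k) m ha (hα k) hm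
  have hsum_le : T * Real.exp (a / m) ≤ ∑ k, α k * Real.exp (a / α k) := by
    rw [← hsum_tangent]
    exact Finset.sum_le_sum fun k _ => hle k
  have hrewrite : ∑ k, α k * ((2 : ℝ) ^ (c / α k) - 1)
      = (∑ k, α k * Real.exp (a / α k)) - T := by
    rw [← hsum, ← Finset.sum_sub_distrib]
    refine Finset.sum_congr rfl fun k _ => ?_
    rw [hrw (α k) (hα k)]; ring
  constructor
  · rw [hrewrite, hrwK]
    nlinarith
  · rw [hrewrite, hrwK]
    constructor
    · intro h
      have hsum_eq : ∑ k, α k * Real.exp (a / α k) = T * Real.exp (a / m) := by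
        linarith
      have := (Finset.sum_eq_sum_iff_of_le (fun k _ => hle k)).mp
        (by rw [hsum_tangent, hsum_eq])
      intro k
      exact tangent_eq a (α k) m ha (hα k) hm (this k (Finset.mem_univ k))
    · intro h
      have heach : ∀ k : Fin K, α k * Real.exp (a / α k) = m * Real.exp (a / m) := by
        intro k; rw [h k]
      rw [Finset.sum_congr rfl fun k _ => heach k, Finset.sum_const]
      simp only [card_univ, Fintype.card_fin, nsmul_eq_mul]
      linear_combination Real.exp (a / m) * hKm
end

section
/- For every real constant c > 0, the function f(x) = x · (2^(c/x) − 1) is strictly convex on the open interval (0, ∞). -/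
/-!
`x (2^(c/x) - 1)` is the perspective `x g(c/x)` of the strictly convex function `g y = 2^y - 1`.
Perspectives of strictly convex functions are strictly convex on `(0, ∞)`: writing
`z = a x + b y`, the point `c/z` is the convex combination of `c/x` and `c/y` with weights
`a x / z` and `b y / z`, so strict convexity of `g` at `c/z`, multiplied by `z`, is exactly the
claim.
-/

open Set

theorem strictConvexOn_rpow_left {b : ℝ} (hb : 1 < b) :
    StrictConvexOn ℝ univ fun x : ℝ => b ^ x := by
  let ℓ := LinearMap.mul ℝ ℝ (Real.log b)
  have hℓ : Function.Injective ℓ := mul_right_injective₀ (Real.log_pos hb).ne'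
  have hexp : (fun x : ℝ => b ^ x) = Real.exp ∘ ℓ := by
    ext x
    simp [ℓ, Real.rpow_def_of_pos (zero_lt_one.trans hb)]
  rw [hexp]
  exact (strictConvexOn_exp.subset (subset_univ _) (convex_univ.linear_image ℓ)).comp_convexOn
    (ℓ.convexOn convex_univ) (Real.exp_monotone.monotoneOn _) hℓ.injOn

theorem StrictConvexOn.perspective {g : ℝ → ℝ} (hg : StrictConvexOn ℝ univ g) {c : ℝ}
    (hc : c ≠ 0) : StrictConvexOn ℝ (Ioi 0) fun x => x * g (c / x) := by
  refine ⟨convex_Ioi 0, fun x (hx : 0 < x) y (hy : 0 < y) hxy a b ha hb hab => ?_⟩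
  simp only [smul_eq_mul]
  set z := a * x + b * y
  have hz : 0 < z := by positivity
  have hcxy : c / x ≠ c / y := fun h =>
    hxy (by simpa [div_eq_div_iff, hx.ne', hy.ne', hc] using h.symm)
  have key : g (c / z) < a * x / z * g (c / x) + b * y / z * g (c / y) := by
    have hw : a * x / z + b * y / z = 1 := by rw [← add_div, div_self hz.ne']
    have hcz : c / z = a * x / z * (c / x) + b * y / z * (c / y) := by
      field_simp
      exact hab.symm
    simpa only [smul_eq_mul, hcz] using
      hg.2 (mem_univ _) (mem_univ _) hcxy (by positivity) (by positivity) hw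
  calc z * g (c / z) < z * (a * x / z * g (c / x) + b * y / z * g (c / y)) :=
        mul_lt_mul_of_pos_left key hz
    _ = a * (x * g (c / x)) + b * (y * g (c / y)) := by field_simp

/-- The per-user power function `f(x) = x·(2^(c/x) − 1)` is strictly convex on `(0, ∞)`. -/
theorem strictConvexOn_power_per_prb (c : ℝ) (hc : 0 < c) :
    StrictConvexOn ℝ (Set.Ioi (0 : ℝ))
      (fun x : ℝ => x * ((2 : ℝ) ^ (c / x) - 1)) := by
  have h := (strictConvexOn_rpow_left one_lt_two).add_const (-1)
  simp only [Pi.add_def, ← sub_eq_add_neg] at h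
  exact h.perspective hc.ne'
end

section
/- Let β > 0, η > 0, b̄ > 0, D0 > 0, D1 ≥ 0 be reals, let K ≥ 2 be a natural number, and let a_N, a_S be natural numbers with 2 ≤ a_N, K + 1 ≤ a_S and a_N < a_S. Define, for R > 0, P_NSM(R) = (K/η)·(2^(R/b̄) − 1)/((a_N − 1)·β) + D0·a_N + D1·a_N·K² and P_SM(R) = (K/η)·(2^(R/b̄) − 1)/((a_S − K)·β) + D0·a_S + D1·a_S·K². Then there exists R₀ > 0 such that for all R with 0 < R < R₀ we have P_NSM(R) < P_SM(R). -/
/-- Proposition 1: for small enough rate requirements, no spatial multiplexing (NSM)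
consumes strictly less total power than spatial multiplexing (SM). -/
theorem nsm_beats_sm_for_small_rates
    (β η bbar D0 D1 : ℝ) (hβ : 0 < β) (hη : 0 < η) (hb : 0 < bbar)
    (hD0 : 0 < D0) (hD1 : 0 ≤ D1)
    (K : ℕ) (hK : 2 ≤ K)
    (aN aS : ℕ) (haN : 2 ≤ aN) (haS : K + 1 ≤ aS) (haNS : aN < aS) :
    ∃ R₀ : ℝ, 0 < R₀ ∧ ∀ R : ℝ, 0 < R → R < R₀ →
      (K / η) * (((2 : ℝ) ^ (R / bbar) - 1) / (((aN : ℝ) - 1) * β))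
          + D0 * aN + D1 * aN * (K : ℝ) ^ 2
        < (K / η) * (((2 : ℝ) ^ (R / bbar) - 1) / (((aS : ℝ) - (K : ℝ)) * β))
          + D0 * aS + D1 * aS * (K : ℝ) ^ 2 := by
  set F : ℝ → ℝ := fun R =>
    ((K : ℝ) / η) * (((2 : ℝ) ^ (R / bbar) - 1) / (((aN : ℝ) - 1) * β))
      + D0 * aN + D1 * aN * (K : ℝ) ^ 2
      - (((K : ℝ) / η) * (((2 : ℝ) ^ (R / bbar) - 1) / (((aS : ℝ) - (K : ℝ)) * β))
          + D0 * aS + D1 * aS * (K : ℝ) ^ 2) with hFdef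
  have hcont : Continuous F := by
    have h2 : Continuous fun R : ℝ => (2 : ℝ) ^ (R / bbar) := by
      have e : ∀ R : ℝ, (2 : ℝ) ^ (R / bbar) = Real.exp (Real.log 2 * (R / bbar)) :=
        fun R => Real.rpow_def_of_pos (by norm_num) _
      simp only [e]; fun_prop
    fun_prop
  have hF0 : F 0 < 0 := by
    simp only [hFdef, zero_div, Real.rpow_zero, sub_self, mul_zero, zero_add]
    have haNS' : (aN : ℝ) < aS := by exact_mod_cast haNS
    nlinarith [mul_nonneg (mul_nonneg hD1 (sq_nonneg (K : ℝ))) (sub_nonneg.mpr haNS'.le),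
      mul_pos hD0 (sub_pos.mpr haNS')]
  have hev : ∀ᶠ R in nhds (0 : ℝ), F R < 0 :=
    (hcont.continuousAt (x := 0)).eventually_lt continuousAt_const hF0
  rcases Metric.eventually_nhds_iff.mp hev with ⟨ε, hε, hball⟩
  refine ⟨ε, hε, fun R hR hRε => ?_⟩
  have : F R < 0 := hball (by simpa [Real.dist_eq, abs_of_pos hR] using hRε)
  simp only [hFdef] at this
  linarith
end

section
/- Let A, B, C, c > 0 be real constants and define Δ(α) = A·α·(2^(c/α) − 1)² − B − C·α for α ∈ (0, ∞). Then Δ is strictly antitone on (0, ∞), Δ(α) → +∞ as α → 0⁺, and Δ(α) → −∞ as α → +∞; consequently there exists a unique α* > 0 with Δ(α*) = 0, and Δ(α) > 0 for all 0 < α < α* while Δ(α) < 0 for all α > α*. -/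
open Filter Set Real

-- strict convexity of 2^t
lemma two_rpow_strictConvex : StrictConvexOn ℝ univ (fun t : ℝ => (2:ℝ) ^ t) := by
  constructor
  · exact convex_univ
  · intro x _ y _ hxy a b ha hb hab
    have hlog : (0:ℝ) < Real.log 2 := Real.log_pos (by norm_num)
    have hne : Real.log 2 * x ≠ Real.log 2 * y := by
      intro h; exact hxy (mul_left_cancel₀ hlog.ne' h)
    have := strictConvexOn_exp.2 (mem_univ (Real.log 2 * x)) (mem_univ (Real.log 2 * y))
      hne ha hb hab
    simp only [smul_eq_mul] at this ⊢
    rw [Real.rpow_def_of_pos (by norm_num), Real.rpow_def_of_pos (by norm_num),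
      Real.rpow_def_of_pos (by norm_num)]
    calc Real.exp (Real.log 2 * (a*x + b*y)) = Real.exp (a * (Real.log 2 * x) + b * (Real.log 2 * y)) := by ring_nf
    _ < a * Real.exp (Real.log 2 * x) + b * Real.exp (Real.log 2 * y) := this

-- secant strict mono: (2^s-1)/s < (2^t-1)/t for 0 < s < t
lemma secant_lt {s t : ℝ} (hs : 0 < s) (hst : s < t) :
    ((2:ℝ) ^ s - 1) / s < ((2:ℝ) ^ t - 1) / t := by
  have := two_rpow_strictConvex.secant_strict_mono (a := 0) (x := s) (y := t)
    (mem_univ _) (mem_univ _) (mem_univ _) hs.ne' (hs.trans hst).ne' hst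
  simpa using this

-- h(t) = (2^t-1)^2/t strictly increasing, expressed via key product lemma
lemma two_rpow_sub_one_pos {t : ℝ} (ht : 0 < t) : 0 < (2:ℝ) ^ t - 1 := by
  have : (1:ℝ) < (2:ℝ) ^ t := Real.one_lt_rpow_iff_of_pos (by norm_num) |>.2 (Or.inl ⟨by norm_num, ht⟩)
  linarith

lemma key_mono (c : ℝ) (hc : 0 < c) {x y : ℝ} (hx : 0 < x) (hxy : x < y) :
    y * ((2:ℝ) ^ (c / y) - 1) ^ 2 < x * ((2:ℝ) ^ (c / x) - 1) ^ 2 := by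
  have hy : 0 < y := hx.trans hxy
  have hs : 0 < c / y := div_pos hc hy
  have ht : 0 < c / x := div_pos hc hx
  have hst : c / y < c / x := div_lt_div_of_pos_left hc hx hxy
  have h1 : (2:ℝ) ^ (c / y) - 1 < (2:ℝ) ^ (c / x) - 1 := by
    have := Real.rpow_lt_rpow_left_iff (x := 2) (by norm_num : (1:ℝ) < 2) |>.2 hst
    linarith
  have h2 := secant_lt hs hst
  have p1 := two_rpow_sub_one_pos hs
  have hmul : ((2:ℝ) ^ (c / y) - 1) * (((2:ℝ) ^ (c / y) - 1) / (c / y))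
      < ((2:ℝ) ^ (c / x) - 1) * (((2:ℝ) ^ (c / x) - 1) / (c / x)) :=
    mul_lt_mul'' h1 h2 p1.le (div_nonneg p1.le hs.le)
  have e1 : y * ((2:ℝ) ^ (c / y) - 1) ^ 2
      = c * (((2:ℝ) ^ (c / y) - 1) * (((2:ℝ) ^ (c / y) - 1) / (c / y))) := by
    field_simp
  have e2 : x * ((2:ℝ) ^ (c / x) - 1) ^ 2
      = c * (((2:ℝ) ^ (c / x) - 1) * (((2:ℝ) ^ (c / x) - 1) / (c / x))) := by
    field_simp
  rw [e1, e2]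
  exact mul_lt_mul_of_pos_left hmul hc

-- exp x ≥ x^2/4 for x ≥ 0
lemma exp_ge_sq_div_four {x : ℝ} (hx : 0 ≤ x) : x ^ 2 / 4 ≤ Real.exp x := by
  have h1 : x / 2 + 1 ≤ Real.exp (x / 2) := Real.add_one_le_exp _
  have h2 : Real.exp (x / 2) * Real.exp (x / 2) = Real.exp x := by
    rw [← Real.exp_add]; ring_nf
  nlinarith [Real.exp_pos (x / 2)]

-- 2^t - 1 ≤ t for 0 < t ≤ 1
lemma two_rpow_le {t : ℝ} (ht : 0 < t) (ht1 : t ≤ 1) : (2:ℝ) ^ t - 1 ≤ t := by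
  rcases eq_or_lt_of_le ht1 with h | h
  · subst h; rw [Real.rpow_one]; norm_num
  · have := secant_lt ht h
    rw [Real.rpow_one] at this
    have : ((2:ℝ) ^ t - 1) / t < 1 := by norm_num at this; linarith
    nlinarith [(div_lt_one ht).1 this]

lemma delta_anti (A B C c : ℝ) (hA : 0 < A) (hC : 0 < C) (hc : 0 < c) :
    StrictAntiOn (fun α : ℝ => A * α * ((2 : ℝ) ^ (c / α) - 1) ^ 2 - B - C * α)
        (Ioi (0 : ℝ)) := by
  intro x hx y hy hxy
  have h := key_mono c hc (mem_Ioi.1 hx) hxy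
  have h2 := mul_lt_mul_of_pos_left h hA
  simp only
  nlinarith

lemma delta_top (A B C c : ℝ) (hA : 0 < A) (hC : 0 < C) (hc : 0 < c) :
    Tendsto (fun α : ℝ => A * α * ((2 : ℝ) ^ (c / α) - 1) ^ 2 - B - C * α)
        (nhdsWithin 0 (Ioi 0)) atTop := by
  have klog : (0:ℝ) < Real.log 2 := Real.log_pos (by norm_num)
  set K : ℝ := A * (c ^ 2 * Real.log 2 ^ 2 / 4) with hK
  have hKpos : 0 < K := by positivity
  have hmin : Tendsto (fun α : ℝ => K * α⁻¹ - B - C) (nhdsWithin 0 (Ioi 0)) atTop := by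
    apply tendsto_atTop_add_const_right
    apply tendsto_atTop_add_const_right
    exact tendsto_inv_nhdsGT_zero.const_mul_atTop hKpos
  apply tendsto_atTop_mono' _ _ hmin
  filter_upwards [Ioo_mem_nhdsGT_of_mem (Set.left_mem_Ico.2 (by positivity : (0:ℝ) < min 1 c))]
    with α hα
  obtain ⟨hα0, hαlt⟩ := hα
  have hα1 : α < 1 := lt_of_lt_of_le hαlt (min_le_left _ _)
  have hαc : α < c := lt_of_lt_of_le hαlt (min_le_right _ _)
  have ht1 : 1 < c / α := (one_lt_div hα0).2 hαc
  have hE2 : (2:ℝ) ≤ (2:ℝ) ^ (c / α) := by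
    have := Real.rpow_le_rpow_left_iff (x := 2) (by norm_num : (1:ℝ) < 2)
      |>.2 ht1.le
    simpa using this
  -- (2^(c/α))^2 = exp(2 log2 (c/α)) ≥ (2 log2 c/α)^2/4
  have hEexp : ((2:ℝ) ^ (c / α)) ^ 2 = Real.exp (2 * (Real.log 2 * (c / α))) := by
    rw [Real.rpow_def_of_pos (by norm_num), sq, ← Real.exp_add]; ring_nf
  have hexp := exp_ge_sq_div_four (x := 2 * (Real.log 2 * (c / α)))
    (by positivity)
  rw [← hEexp] at hexp
  -- so (2^(c/α) - 1)^2 ≥ (2^(c/α))^2/4 ≥ (log2 * c/α)^2/4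
  have hsq : ((2:ℝ) ^ (c / α)) ^ 2 / 4 ≤ ((2:ℝ) ^ (c / α) - 1) ^ 2 := by nlinarith
  have hq : (Real.log 2 * (c / α)) ^ 2 / 4 ≤ ((2:ℝ) ^ (c / α) - 1) ^ 2 := by nlinarith
  have hmain : K * α⁻¹ ≤ A * α * ((2:ℝ) ^ (c / α) - 1) ^ 2 := by
    have h3 : A * α * ((Real.log 2 * (c / α)) ^ 2 / 4) ≤ A * α * ((2:ℝ) ^ (c / α) - 1) ^ 2 :=
      mul_le_mul_of_nonneg_left hq (by positivity)
    have h4 : A * α * ((Real.log 2 * (c / α)) ^ 2 / 4) = K * α⁻¹ := by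
      rw [hK]; field_simp
    linarith
  have : C * α ≤ C := by nlinarith
  linarith

lemma delta_bot (A B C c : ℝ) (hA : 0 < A) (hC : 0 < C) (hc : 0 < c) :
    Tendsto (fun α : ℝ => A * α * ((2 : ℝ) ^ (c / α) - 1) ^ 2 - B - C * α)
        atTop atBot := by
  have hmaj : Tendsto (fun α : ℝ => A * c ^ 2 - B - C * α) atTop atBot := by
    have h1 : Tendsto (fun α : ℝ => C * α) atTop atTop :=
      Tendsto.const_mul_atTop hC tendsto_id
    have h2 : Tendsto (fun α : ℝ => -(C * α)) atTop atBot := tendsto_neg_atBot_iff.mpr h1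
    exact (tendsto_atBot_add_const_left atTop (A * c ^ 2 - B) h2).congr (fun x => by ring)
  apply tendsto_atBot_mono' _ _ hmaj
  filter_upwards [eventually_ge_atTop (max 1 c)] with α hα
  have hα1 : 1 ≤ α := le_trans (le_max_left _ _) hα
  have hαc : c ≤ α := le_trans (le_max_right _ _) hα
  have hα0 : 0 < α := lt_of_lt_of_le one_pos hα1
  have ht : 0 < c / α := div_pos hc hα0
  have ht1 : c / α ≤ 1 := (div_le_one hα0).2 hαc
  have hle := two_rpow_le ht ht1
  have p1 := two_rpow_sub_one_pos ht
  have h1 : ((2:ℝ) ^ (c / α) - 1) ^ 2 ≤ (c / α) ^ 2 := by nlinarith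
  have h2 : A * α * ((2:ℝ) ^ (c / α) - 1) ^ 2 ≤ A * α * (c / α) ^ 2 :=
    mul_le_mul_of_nonneg_left h1 (by positivity)
  have h3 : A * α * (c / α) ^ 2 = A * c ^ 2 / α := by field_simp
  have h4 : A * c ^ 2 / α ≤ A * c ^ 2 := div_le_self (by positivity) hα1
  linarith


/-- Proposition 2: the power-difference `Δ(α) = A·α·(2^(c/α) − 1)² − B − C·α` is strictly
antitone on `(0, ∞)`, tends to `+∞` at `0⁺` and to `−∞` at `+∞`; hence it has a unique
root `α*`, being positive before it and negative after it. -/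
theorem power_difference_crossover
    (A B C c : ℝ) (hA : 0 < A) (hB : 0 < B) (hC : 0 < C) (hc : 0 < c) :
    StrictAntiOn (fun α : ℝ => A * α * ((2 : ℝ) ^ (c / α) - 1) ^ 2 - B - C * α)
        (Ioi (0 : ℝ)) ∧
    Tendsto (fun α : ℝ => A * α * ((2 : ℝ) ^ (c / α) - 1) ^ 2 - B - C * α)
        (nhdsWithin 0 (Ioi 0)) atTop ∧
    Tendsto (fun α : ℝ => A * α * ((2 : ℝ) ^ (c / α) - 1) ^ 2 - B - C * α)
        atTop atBot ∧
    ∃! αstar : ℝ, 0 < αstar ∧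
      A * αstar * ((2 : ℝ) ^ (c / αstar) - 1) ^ 2 - B - C * αstar = 0 ∧
      (∀ α : ℝ, 0 < α → α < αstar →
        0 < A * α * ((2 : ℝ) ^ (c / α) - 1) ^ 2 - B - C * α) ∧
      (∀ α : ℝ, αstar < α →
        A * α * ((2 : ℝ) ^ (c / α) - 1) ^ 2 - B - C * α < 0) := by
  set f : ℝ → ℝ := fun α => A * α * ((2 : ℝ) ^ (c / α) - 1) ^ 2 - B - C * α with hf
  have hanti : StrictAntiOn f (Ioi (0:ℝ)) := delta_anti A B C c hA hC hc
  have htop : Tendsto f (nhdsWithin 0 (Ioi 0)) atTop := delta_top A B C c hA hC hc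
  have hbot : Tendsto f atTop atBot := delta_bot A B C c hA hC hc
  refine ⟨hanti, htop, hbot, ?_⟩
  -- find a with f a > 0, a > 0
  obtain ⟨a, ha, hfa⟩ : ∃ a, a ∈ Ioi (0:ℝ) ∧ 0 < f a := by
    have h1 : ∀ᶠ α in nhdsWithin (0:ℝ) (Ioi 0), 0 < f α := htop.eventually (eventually_gt_atTop 0)
    have h2 : ∀ᶠ α in nhdsWithin (0:ℝ) (Ioi 0), α ∈ Ioi (0:ℝ) := self_mem_nhdsWithin
    exact (h2.and h1).exists
  -- find b > a with f b < 0
  obtain ⟨b, hab, hfb⟩ : ∃ b, a < b ∧ f b < 0 := by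
    have h1 : ∀ᶠ α in atTop, f α < 0 := hbot.eventually (eventually_lt_atBot 0)
    have h2 : ∀ᶠ α in atTop, a < α := eventually_gt_atTop a
    exact (h2.and h1).exists
  have hb : (0:ℝ) < b := lt_trans (mem_Ioi.1 ha) hab
  -- continuity on [a,b]
  have hcont : ContinuousOn f (Icc a b) := by
    have hrpow : ∀ x : ℝ, (2:ℝ) ^ x = Real.exp (Real.log 2 * x) := fun x =>
      Real.rpow_def_of_pos (by norm_num) x
    have hsub : Icc a b ⊆ {x : ℝ | x ≠ 0} := fun x hx =>
      ne_of_gt (lt_of_lt_of_le (mem_Ioi.1 ha) hx.1)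
    apply ContinuousOn.sub
    apply ContinuousOn.sub
    · apply ContinuousOn.mul
      · exact (continuous_const.mul continuous_id).continuousOn
      · apply ContinuousOn.pow
        apply ContinuousOn.sub _ continuousOn_const
        have : ContinuousOn (fun x : ℝ => Real.exp (Real.log 2 * (c / x))) (Icc a b) := by
          apply Real.continuous_exp.comp_continuousOn
          apply ContinuousOn.mul continuousOn_const
          exact continuousOn_const.div continuousOn_id (fun x hx => hsub hx)
        exact this.congr (fun x _ => hrpow (c / x))
    · exact continuousOn_const
    · exact (continuous_const.mul continuous_id).continuousOn
  -- IVT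
  have hmem : (0:ℝ) ∈ Icc (f b) (f a) := ⟨hfb.le, hfa.le⟩
  obtain ⟨αstar, hαmem, hfα⟩ := intermediate_value_Icc' hab.le hcont hmem
  have hα0 : 0 < αstar := lt_of_lt_of_le (mem_Ioi.1 ha) hαmem.1
  refine ⟨αstar, ⟨hα0, hfα, ?_, ?_⟩, ?_⟩
  · intro α hαpos hαlt
    have := hanti (mem_Ioi.2 hαpos) (mem_Ioi.2 hα0) hαlt
    rw [hfα] at this; exact this
  · intro α hαgt
    have := hanti (mem_Ioi.2 hα0) (mem_Ioi.2 (lt_trans hα0 hαgt)) hαgt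
    rw [hfα] at this; exact this
  · rintro β ⟨hβ0, hfβ, -, -⟩
    exact hanti.injOn (mem_Ioi.2 hβ0) (mem_Ioi.2 hα0) (by show f β = f αstar; rw [hfα]; exact hfβ)
end

section
/- Let a > 1, R > 0, b̄ > 0, η > 0, β > 0, D1 > 0 and D0 ≥ 0 be real constants, and define f(α) = (α/(η·(a − 1)·β))·(2^(R/(b̄·α)) − 1) + D0·a + D1·α·a for α ∈ (0, ∞). Then for every α > 0, the derivative of f at α vanishes if and only if (x − 1)·exp(x − 1) = (D1·η·a·(a − 1)·β − 1)/e, where x = R·(log 2)/(b̄·α) and e = exp 1. -/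
open Real

/-! With `x = R log 2 / (b̄ α)` the rate term is `α (eˣ − 1)`, whose derivative in `α` is
`eˣ − 1 − x eˣ` (as `α · dx/dα = −x`). Setting `f'(α) = 0` and multiplying by the constant
`η (a − 1) β` gives `(x − 1) eˣ = D₁ η a (a − 1) β − 1`; dividing by `e` yields the stated form. -/

theorem hasDerivAt_mul_exp_div_sub_one (c : ℝ) {t : ℝ} (ht : t ≠ 0) :
    HasDerivAt (fun s => s * (exp (c / s) - 1)) (exp (c / t) - 1 - c / t * exp (c / t)) t := by
  have hx : HasDerivAt (fun s => c / s) (-(c / t) / t) t :=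
    ((hasDerivAt_inv ht).const_mul c).congr_deriv (by field_simp)
  refine ((hasDerivAt_id' t).mul (hx.exp.sub_const 1)).congr_deriv ?_
  field_simp
  ring

theorem exp_sub_one_sub_mul_exp_div_add_eq_zero_iff {K : ℝ} (hK : K ≠ 0) (D x : ℝ) :
    (exp x - 1 - x * exp x) / K + D = 0 ↔ (x - 1) * exp (x - 1) = (D * K - 1) / exp 1 := by
  rw [exp_sub, mul_div_assoc', div_left_inj' (exp_pos 1).ne', div_add' _ _ _ hK,
    div_eq_zero_iff, or_iff_left hK]
  constructor <;> intro h <;> linarith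

theorem optimal_number_of_prbs_deriv_general
    (a R bbar η β D1 D0 : ℝ)
    (ha : 1 < a) (hη : 0 < η) (hβ : 0 < β) :
    ∀ α : ℝ, 0 < α →
      (deriv (fun α : ℝ =>
          (α / (η * (a - 1) * β)) * ((2 : ℝ) ^ (R / (bbar * α)) - 1)
            + D0 * a + D1 * α * a) α = 0 ↔
        (R * Real.log 2 / (bbar * α) - 1)
            * Real.exp (R * Real.log 2 / (bbar * α) - 1)
          = (D1 * η * a * (a - 1) * β - 1) / Real.exp 1) := by
  intro α hα
  set K := η * (a - 1) * β
  have hK : K ≠ 0 := by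
    have := sub_pos.2 ha
    positivity
  set c := R * log 2 / bbar
  have hf : (fun α : ℝ => (α / K) * ((2 : ℝ) ^ (R / (bbar * α)) - 1) + D0 * a + D1 * α * a)
      = fun t => t * (exp (c / t) - 1) / K + D0 * a + t * (D1 * a) := by
    ext t
    rw [rpow_def_of_pos two_pos, show log 2 * (R / (bbar * t)) = c / t by ring]
    ring
  have hderiv : HasDerivAt (fun t => t * (exp (c / t) - 1) / K + D0 * a + t * (D1 * a))
      ((exp (c / α) - 1 - c / α * exp (c / α)) / K + D1 * a) α :=
    (((hasDerivAt_mul_exp_div_sub_one c hα.ne').div_const K).add_const (D0 * a)).add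
      (hasDerivAt_mul_const (D1 * a))
  rw [hf, hderiv.deriv, show R * log 2 / (bbar * α) = c / α by ring,
    exp_sub_one_sub_mul_exp_div_add_eq_zero_iff hK, show D1 * a * K = D1 * η * a * (a - 1) * β by ring]

/-- Equation (15): the derivative of the single-user total power with respect to the
number of PRBs `α` vanishes iff `(x − 1)·e^(x − 1) = (D1·η·a·(a − 1)·β − 1)/e`, where
`x = R·log 2/(b̄·α)` — i.e. the Lambert-W characterization of the optimal PRB count. -/
theorem optimal_number_of_prbs_deriv
    (a R bbar η β D1 D0 : ℝ)
    (ha : 1 < a) (hR : 0 < R) (hb : 0 < bbar) (hη : 0 < η) (hβ : 0 < β)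
    (hD1 : 0 < D1) (hD0 : 0 ≤ D0) :
    ∀ α : ℝ, 0 < α →
      (deriv (fun α : ℝ =>
          (α / (η * (a - 1) * β)) * ((2 : ℝ) ^ (R / (bbar * α)) - 1)
            + D0 * a + D1 * α * a) α = 0 ↔
        (R * Real.log 2 / (bbar * α) - 1)
            * Real.exp (R * Real.log 2 / (bbar * α) - 1)
          = (D1 * η * a * (a - 1) * β - 1) / Real.exp 1) :=
  optimal_number_of_prbs_deriv_general a R bbar η β D1 D0 ha hη hβ
end

section
/- Let ℓ ≥ 1 be a natural number, let a, N0, P_LI be reals with N0 > 0, P_LI ≥ 0 and a − ℓ > 0, and for each l ∈ Fin ℓ let K2 l be a real with a − K2 l − 1 > 0, let I l ≥ Ĩ l ≥ 0 be interference powers, β l > 0 and β' l > 0 channel gains, R' l > 0 a normalized rate, and Δk2 l a real number. Define γ1 l = (a − K2 l − 1)·(I l + N0), γ2 l = (a − ℓ)·(Ĩ l + N0), and Δ l = ((a − K2 l − 1)·(a − ℓ)/γ1 l)·((−Δk2 l)/(2^(R' l) − 1) + P_LI/ℓ). If for every l we have (γ2 l/γ1 l)·(β' l)⁻¹ ≤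 (β l)⁻¹ + Δ l, then ∑_{l} (γ2 l·(β' l)⁻¹ − γ1 l·(β l)⁻¹)/((a − K2 l − 1)·(a − ℓ)) ≤ ∑_{l} (−Δk2 l)/(2^(R' l) − 1) + P_LI. -/
open Finset

theorem sub_div_le_of_div_mul_le_add {𝕜 : Type*} [Field 𝕜] [LinearOrder 𝕜] [IsStrictOrderedRing 𝕜]
    {γ₁ γ₂ κ x y t : 𝕜} (hγ₁ : 0 < γ₁) (hκ : 0 < κ)
    (h : γ₂ / γ₁ * x ≤ y + κ / γ₁ * t) :
    (γ₂ * x - γ₁ * y) / κ ≤ t := by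
  have hmul : γ₂ * x ≤ γ₁ * y + κ * t := by
    have := mul_le_mul_of_nonneg_left h hγ₁.le
    rwa [mul_add, ← mul_assoc, mul_div_cancel₀ _ hγ₁.ne', ← mul_assoc,
      mul_div_cancel₀ _ hγ₁.ne'] at this
  rw [div_le_iff₀ hκ]
  linarith

theorem sum_fin_const_div_card {𝕜 : Type*} [Field 𝕜] [CharZero 𝕜] {n : ℕ} (hn : n ≠ 0)
    (c : 𝕜) : ∑ _ : Fin n, c / n = c := by
  rw [sum_const, card_univ, Fintype.card_fin, nsmul_eq_mul, mul_div_cancel₀ _ (by exact_mod_cast hn)]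

theorem switch_off_condition_sm_general
    (ℓ : ℕ) (hℓ : 1 ≤ ℓ)
    (a N0 P_LI : ℝ) (hN0 : 0 < N0) (ha : 0 < a - ℓ)
    (K2 : Fin ℓ → ℝ) (hK2 : ∀ l, 0 < a - K2 l - 1)
    (I Itilde : Fin ℓ → ℝ) (hItilde : ∀ l, 0 ≤ Itilde l) (hI : ∀ l, Itilde l ≤ I l)
    (β β' : Fin ℓ → ℝ)
    (R' : Fin ℓ → ℝ)
    (Δk2 : Fin ℓ → ℝ)
    (hcond : ∀ l,
      ((a - ℓ) * (Itilde l + N0)) / ((a - K2 l - 1) * (I l + N0)) * (β' l)⁻¹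
        ≤ (β l)⁻¹
          + ((a - K2 l - 1) * (a - ℓ) / ((a - K2 l - 1) * (I l + N0)))
            * ((-Δk2 l) / ((2 : ℝ) ^ (R' l) - 1) + P_LI / ℓ)) :
    ∑ l, ((a - ℓ) * (Itilde l + N0) * (β' l)⁻¹
            - (a - K2 l - 1) * (I l + N0) * (β l)⁻¹)
          / ((a - K2 l - 1) * (a - ℓ))
      ≤ (∑ l, (-Δk2 l) / ((2 : ℝ) ^ (R' l) - 1)) + P_LI := by
  have hγ₁ : ∀ l, 0 < (a - K2 l - 1) * (I l + N0) := fun l =>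
    mul_pos (hK2 l) (by linarith [hItilde l, hI l])
  calc _ ≤ ∑ l, ((-Δk2 l) / ((2 : ℝ) ^ (R' l) - 1) + P_LI / ℓ) :=
        sum_le_sum fun l _ => sub_div_le_of_div_mul_le_add (hγ₁ l) (mul_pos (hK2 l) ha) (hcond l)
    _ = _ := by rw [sum_add_distrib, sum_fin_const_div_card (by omega)]

/-- Theorem 1, spatial-multiplexing case: the per-user sufficient conditions imply the
summed inequality stating that switching off the base station and re-assigning its
users is energy optimal. -/
theorem switch_off_condition_sm
    (ℓ : ℕ) (hℓ : 1 ≤ ℓ)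
    (a N0 P_LI : ℝ) (hN0 : 0 < N0) (hPLI : 0 ≤ P_LI) (ha : 0 < a - ℓ)
    (K2 : Fin ℓ → ℝ) (hK2 : ∀ l, 0 < a - K2 l - 1)
    (I Itilde : Fin ℓ → ℝ) (hItilde : ∀ l, 0 ≤ Itilde l) (hI : ∀ l, Itilde l ≤ I l)
    (β β' : Fin ℓ → ℝ) (hβ : ∀ l, 0 < β l) (hβ' : ∀ l, 0 < β' l)
    (R' : Fin ℓ → ℝ) (hR' : ∀ l, 0 < R' l)
    (Δk2 : Fin ℓ → ℝ)
    (hcond : ∀ l,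
      ((a - ℓ) * (Itilde l + N0)) / ((a - K2 l - 1) * (I l + N0)) * (β' l)⁻¹
        ≤ (β l)⁻¹
          + ((a - K2 l - 1) * (a - ℓ) / ((a - K2 l - 1) * (I l + N0)))
            * ((-Δk2 l) / ((2 : ℝ) ^ (R' l) - 1) + P_LI / ℓ)) :
    ∑ l, ((a - ℓ) * (Itilde l + N0) * (β' l)⁻¹
            - (a - K2 l - 1) * (I l + N0) * (β l)⁻¹)
          / ((a - K2 l - 1) * (a - ℓ))
      ≤ (∑ l, (-Δk2 l) / ((2 : ℝ) ^ (R' l) - 1)) + P_LI :=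
  switch_off_condition_sm_general ℓ hℓ a N0 P_LI hN0 ha K2 hK2 I Itilde hItilde hI β β' R' Δk2 hcond
end
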